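/- Let l ≥ 1 and 2 ≤ t ≤ l + 1 be integers. For distinct nonzero vectors a, b of (ZMod 2)^m, let E_{l,t}(a,b) denote the number of sequences a = γ₀, γ₁, …, γ_l = b of pairwise distinct nonzero vectors of (ZMod 2)^m whose span has dimension t over ZMod 2. Then E_{l,t}(a,b) does not depend on the choice of a and b: for any two pairs (a,b) and (a',b') of distinct nonzero vectors, E_{l,t}(a,b) = E_{l,t}(a',b'). -/

import Mathlib

/-- `countE m l t a b` is the number of sequences `a = γ₀, γ₁, …, γ_l = b` of pairwise
distinct nonzero vectors of `(ZMod 2)^m` whose span has dimension `t` over `ZMod 2`. -/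
noncomputable def countE (m l t : ℕ) (a b : Fin m → ZMod 2) : ℕ :=
  Set.ncard {γ : Fin (l + 1) → (Fin m → ZMod 2) |
    γ 0 = a ∧ γ (Fin.last l) = b ∧ Function.Injective γ ∧ (∀ i, γ i ≠ 0) ∧
    Module.finrank (ZMod 2) (Submodule.span (ZMod 2) (Set.range γ)) = t}

/-!
Over `ZMod 2` two distinct nonzero vectors are linearly independent, so some linear automorphism
of `(ZMod 2)^m` maps `(a, b)` to `(a', b')`. Composing a sequence with it preserves injectivity,
nonvanishing and the dimension of the span, hence it is a bijection between the two sets of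
sequences being counted.
-/

theorem ZMod.linearIndependent_pair {V : Type*} [AddCommGroup V] [Module (ZMod 2) V] {x y : V}
    (hx : x ≠ 0) (hy : y ≠ 0) (hxy : x ≠ y) : LinearIndependent (ZMod 2) ![x, y] := by
  rw [LinearIndependent.pair_iff' hx]
  intro c
  fin_cases c
  · change (0 : ZMod 2) • x ≠ y
    simpa using hy.symm
  · change (1 : ZMod 2) • x ≠ y
    simpa using hxy

theorem LinearIndependent.exists_linearEquiv_apply_eq {K V ι : Type*} [Field K] [AddCommGroup V]
    [Module K V] [Finite ι] {v w : ι → V} (hv : LinearIndependent K v)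
    (hw : LinearIndependent K w) : ∃ e : V ≃ₗ[K] V, ∀ i, e (v i) = w i := by
  have := FiniteDimensional.span_of_finite K (Set.finite_range v)
  obtain ⟨e, he⟩ := Submodule.exists_linearEquiv_restrict_eq
    ((Module.Basis.span hv).equiv (Module.Basis.span hw) (Equiv.refl ι))
  refine ⟨e, fun i => ?_⟩
  have hvi := he (Module.Basis.span hv i)
  rw [Module.Basis.equiv_apply, Equiv.refl_apply, Module.Basis.span_apply,
    Module.Basis.span_apply] at hvi
  exact hvi.symm

section SpanPaths

variable (K : Type*) {V W : Type*} [Field K] [AddCommGroup V] [Module K V] [AddCommGroup W]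
  [Module K W]

def spanPaths (l t : ℕ) (a b : V) : Set (Fin (l + 1) → V) :=
  {γ | γ 0 = a ∧ γ (Fin.last l) = b ∧ Function.Injective γ ∧ (∀ i, γ i ≠ 0) ∧
    Module.finrank K (Submodule.span K (Set.range γ)) = t}

variable {K}

theorem comp_mem_spanPaths_iff (e : V ≃ₗ[K] W) {l t : ℕ} {a b : V} {γ : Fin (l + 1) → V} :
    e ∘ γ ∈ spanPaths K l t (e a) (e b) ↔ γ ∈ spanPaths K l t a b := by
  simp only [spanPaths, Set.mem_ofPred_eq, Function.comp_apply, e.injective.eq_iff,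
    e.injective.of_comp_iff, map_ne_zero_iff _ e.injective]
  rw [Set.range_comp, ← LinearEquiv.coe_coe, ← Submodule.map_span, LinearEquiv.finrank_map_eq]

theorem ncard_spanPaths_map (e : V ≃ₗ[K] W) (l t : ℕ) (a b : V) :
    (spanPaths K l t (e a) (e b)).ncard = (spanPaths K l t a b).ncard := by
  let φ : (Fin (l + 1) → V) ≃ (Fin (l + 1) → W) := Equiv.piCongrRight fun _ => e.toEquiv
  have himage : spanPaths K l t (e a) (e b) = φ '' spanPaths K l t a b := by
    ext γ
    rw [φ.image_eq_preimage_symm, Set.mem_preimage, ← comp_mem_spanPaths_iff e]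
    exact iff_of_eq (congrArg _ (funext fun i => (e.apply_symm_apply (γ i)).symm))
  rw [himage, Set.ncard_image_of_injective _ φ.injective]

end SpanPaths

theorem countE_independent_of_endpoints_general (m : ℕ) (l t : ℕ)
    (a b a' b' : Fin m → ZMod 2)
    (ha : a ≠ 0) (hb : b ≠ 0) (hab : a ≠ b)
    (ha' : a' ≠ 0) (hb' : b' ≠ 0) (hab' : a' ≠ b') :
    countE m l t a b = countE m l t a' b' := by
  obtain ⟨e, he⟩ := (ZMod.linearIndependent_pair ha hb hab).exists_linearEquiv_apply_eq
    (ZMod.linearIndependent_pair ha' hb' hab')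
  have hea : e a = a' := he 0
  have heb : e b = b' := he 1
  change (spanPaths (ZMod 2) l t a b).ncard = (spanPaths (ZMod 2) l t a' b').ncard
  rw [← hea, ← heb, ncard_spanPaths_map]

/-- For `l ≥ 1` and `2 ≤ t ≤ l + 1`, the count `E_{l,t}(a, b)` does not depend on the
choice of the pair of distinct nonzero vectors `(a, b)`. -/
theorem countE_independent_of_endpoints (m : ℕ) (l t : ℕ)
    (hl : 1 ≤ l) (ht2 : 2 ≤ t) (ht : t ≤ l + 1)
    (a b a' b' : Fin m → ZMod 2)
    (ha : a ≠ 0) (hb : b ≠ 0) (hab : a ≠ b)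
    (ha' : a' ≠ 0) (hb' : b' ≠ 0) (hab' : a' ≠ b') :
    countE m l t a b = countE m l t a' b' :=
  countE_independent_of_endpoints_general m l t a b a' b' ha hb hab ha' hb' hab'
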